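/- arXiv:1607.00748 — 3 statements merged into one kernel-verified Lean document; each statement's English description precedes it below -/
import Mathlib

section
/- Under the stability condition max_k E[J_k(1)] < E[I(1)] with I(1) > 0 a.s., almost surely there exists a finite N such that A(-N) + W*_k(-N) + J_k(N) < 0 for all k = 1, ..., K; i.e., the backward coalescence time detecting all past service completions before time 0 is almost surely finite. -/
/-! By the strong law of large numbers each station's random walk
`S_k(n) = ∑_{i ≤ n} (J_k(i) - I(i))` has negative drift, so it tends to `-∞` almost surely, and
almost surely there is `N ≥ 1` with `S_k(m) ≤ -1` for all `m ≥ N` and all stations `k`. For such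
`N`, `W*_k(-N) = sup_{m ≥ N} (S_k(m) - S_k(N)) ≤ -1 - S_k(N)`, hence
`A(-N) + W*_k(-N) + J_k(N) ≤ -1 - ∑_{i ≤ N} J_k(i) + J_k(N) ≤ -1`. -/

open MeasureTheory ProbabilityTheory Filter Finset Function

theorem Finset.sum_range_succ_eq_sum_Icc {M : Type*} [AddCommMonoid M] (f : ℕ → M) (n : ℕ) :
    ∑ i ∈ range n, f (i + 1) = ∑ i ∈ Icc 1 n, f i := by
  rw [range_eq_Ico, sum_Ico_add', zero_add, Ico_add_one_right_eq_Icc]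

theorem Finset.sum_Icc_one_add_sum_Icc_succ {M : Type*} [AddCommMonoid M] (f : ℕ → M)
    {N m : ℕ} (h : N ≤ m) :
    ∑ i ∈ Icc 1 N, f i + ∑ i ∈ Icc (N + 1) m, f i = ∑ i ∈ Icc 1 m, f i := by
  simpa only [← Icc_add_one_left_eq_Ioc, zero_add] using sum_Ioc_consecutive f N.zero_le h

section RandomWalk

variable {Ω : Type*} [MeasurableSpace Ω] {P : Measure Ω}

theorem ae_tendsto_sum_range_atBot_of_integral_neg {X : ℕ → Ω → ℝ}
    (hint : Integrable (X 0) P) (hindep : Pairwise ((· ⟂ᵢ[P] ·) on X))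
    (hident : ∀ i, IdentDistrib (X i) (X 0) P P) (hneg : P[X 0] < 0) :
    ∀ᵐ ω ∂P, Tendsto (fun n : ℕ => ∑ i ∈ range n, X i ω) atTop atBot := by
  filter_upwards [strong_law_ae_real X hint hindep hident] with ω hω
  have hprod := tendsto_natCast_atTop_atTop.atTop_mul_neg hneg hω
  refine hprod.congr' ?_
  filter_upwards [eventually_ne_atTop 0] with n hn
  exact mul_div_cancel₀ _ (Nat.cast_ne_zero.2 hn)

theorem ae_tendsto_sum_Icc_atBot_of_integral_neg {Y : ℕ → Ω → ℝ} (hindep : iIndepFun Y P)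
    (hident : ∀ n, 1 ≤ n → IdentDistrib (Y n) (Y 1) P P) (hint : Integrable (Y 1) P)
    (hneg : P[Y 1] < 0) :
    ∀ᵐ ω ∂P, Tendsto (fun n : ℕ => ∑ i ∈ Icc 1 n, Y i ω) atTop atBot := by
  have hpair : Pairwise ((· ⟂ᵢ[P] ·) on fun n => Y (n + 1)) := fun i j hij =>
    hindep.indepFun (by omega)
  filter_upwards [ae_tendsto_sum_range_atBot_of_integral_neg hint hpair
    (fun n => hident (n + 1) n.succ_pos) hneg] with ω hω
  simpa only [sum_range_succ_eq_sum_Icc (Y · ω)] using hω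

end RandomWalk

theorem iSup_sum_Icc_succ_le {x : ℕ → ℝ} {N : ℕ} {c : ℝ}
    (h : ∀ m, N ≤ m → ∑ i ∈ Icc 1 m, x i ≤ c) :
    ⨆ m : {m : ℕ // N ≤ m}, ∑ i ∈ Icc (N + 1) (m : ℕ), x i ≤ c - ∑ i ∈ Icc 1 N, x i := by
  have : Nonempty {m : ℕ // N ≤ m} := ⟨⟨N, le_rfl⟩⟩
  refine ciSup_le fun ⟨m, hm⟩ => ?_
  have := sum_Icc_one_add_sum_Icc_succ x hm
  linarith [h m hm]

theorem neg_sum_Icc_add_iSup_sum_Icc_add_lt_zero {j s : ℕ → ℝ} (hj : ∀ i, 0 ≤ j i) {N : ℕ}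
    (hN : 1 ≤ N) (h : ∀ m, N ≤ m → ∑ i ∈ Icc 1 m, (j i - s i) ≤ -1) :
    -∑ i ∈ Icc 1 N, s i + (⨆ m : {m : ℕ // N ≤ m}, ∑ i ∈ Icc (N + 1) (m : ℕ), (j i - s i))
      + j N < 0 := by
  have hsup := iSup_sum_Icc_succ_le h
  have hjN : j N ≤ ∑ i ∈ Icc 1 N, j i :=
    single_le_sum (fun i _ => hj i) (mem_Icc.2 ⟨hN, le_rfl⟩)
  rw [sum_sub_distrib] at hsup
  linarith

theorem backward_coalescence_time_finite_general
    {Ω : Type*} [MeasurableSpace Ω] (P : Measure Ω)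
    (K : ℕ)
    (J : ℕ → Ω → Fin K → ℝ) (I : ℕ → Ω → ℝ)
    (hindep : iIndepFun (fun n ω => (J n ω, I n ω)) P)
    (hident : ∀ n, 1 ≤ n →
      IdentDistrib (fun ω => (J n ω, I n ω)) (fun ω => (J 1 ω, I 1 ω)) P P)
    (hJpos : ∀ n ω k, 0 ≤ J n ω k)
    (hJint : ∀ k, Integrable (fun ω => J 1 ω k) P) (hIint : Integrable (I 1) P)
    (hmean : ∀ k, ∫ ω, J 1 ω k ∂P < ∫ ω, I 1 ω ∂P)
    (A : ℕ → Ω → ℝ) (W : Fin K → ℕ → Ω → ℝ)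
    (hA : ∀ n ω, A n ω = -∑ m ∈ Finset.Icc 1 n, I m ω)
    (hW : ∀ k n ω, W k n ω =
      ⨆ m : {m : ℕ // n ≤ m}, ∑ i ∈ Finset.Icc (n + 1) (m : ℕ), (J i ω k - I i ω)) :
    ∀ᵐ ω ∂P, ∃ N, 1 ≤ N ∧ ∀ k, A N ω + W k N ω + J N ω k < 0 := by
  have hdrift : ∀ k, ∀ᵐ ω ∂P,
      Tendsto (fun n => ∑ i ∈ Icc 1 n, (J i ω k - I i ω)) atTop atBot := fun k => by
    have hg : Measurable fun p : (Fin K → ℝ) × ℝ => p.1 k - p.2 := by fun_prop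
    refine ae_tendsto_sum_Icc_atBot_of_integral_neg (hindep.comp _ fun _ => hg)
      (fun n hn => (hident n hn).comp hg) ((hJint k).sub hIint) ?_
    linarith [integral_sub (hJint k) hIint, hmean k]
  filter_upwards [ae_all_iff.2 hdrift] with ω hω
  obtain ⟨N₀, hN₀⟩ :=
    eventually_atTop.1 (eventually_all.2 fun k => (hω k).eventually_le_atBot (-1))
  refine ⟨max N₀ 1, le_max_right _ _, fun k => ?_⟩
  rw [hA, hW]
  exact neg_sum_Icc_add_iSup_sum_Icc_add_lt_zero (hJpos · ω k) (le_max_right _ _)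
    fun m hm => hN₀ m (le_of_max_le_left hm) k

/-- Under stability max_k E[J_k(1)] < E[I(1)] with I(1) > 0 a.s., almost surely there is a
finite N with A(-N) + W*_k(-N) + J_k(N) < 0 for all stations k: the backward coalescence
time is a.s. finite. Here W*_k(-n) = sup_{m ≥ n} ∑_{i=n+1}^m (J_k(i) - I(i)). -/
theorem backward_coalescence_time_finite
    {Ω : Type*} [MeasurableSpace Ω] (P : Measure Ω) [IsProbabilityMeasure P]
    (K : ℕ) (hK : 1 ≤ K)
    (J : ℕ → Ω → Fin K → ℝ) (I : ℕ → Ω → ℝ)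
    (hmeas : ∀ n, Measurable (fun ω => (J n ω, I n ω)))
    (hindep : iIndepFun (fun n ω => (J n ω, I n ω)) P)
    (hident : ∀ n, 1 ≤ n →
      IdentDistrib (fun ω => (J n ω, I n ω)) (fun ω => (J 1 ω, I 1 ω)) P P)
    (hJpos : ∀ n ω k, 0 ≤ J n ω k) (hIpos : ∀ n, ∀ᵐ ω ∂P, 0 < I n ω)
    (hJint : ∀ k, Integrable (fun ω => J 1 ω k) P) (hIint : Integrable (I 1) P)
    (hmean : ∀ k, ∫ ω, J 1 ω k ∂P < ∫ ω, I 1 ω ∂P)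
    (A : ℕ → Ω → ℝ) (W : Fin K → ℕ → Ω → ℝ)
    (hA : ∀ n ω, A n ω = -∑ m ∈ Finset.Icc 1 n, I m ω)
    (hW : ∀ k n ω, W k n ω =
      ⨆ m : {m : ℕ // n ≤ m}, ∑ i ∈ Finset.Icc (n + 1) (m : ℕ), (J i ω k - I i ω)) :
    ∀ᵐ ω ∂P, ∃ N, 1 ≤ N ∧ ∀ k, A N ω + W k N ω + J N ω k < 0 :=
  backward_coalescence_time_finite_general P K J I hindep hident hJpos hJint hIint hmean A W hA hW
end

section
/- Let V*_k = -∑_{n=1}^{-τ_k} J_k(n)/μ_k² where τ_k = max{n ≤ 0 : W*_k(n) = 0} is the last time the stationary waiting time at station k was zero. Under stability E[J_k(1)/μ_k] < E[I(1)] and the exponential moment condition E[exp(θ J_k(1))] < ∞ for some θ > 0, V*_k is integrable: E[|V*_k|] < ∞. -/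
open MeasureTheory ProbabilityTheory Real

/-!
Write `S m = ∑_{i ≤ m} (J i / μ - I i)`. Since `W k ≠ 0` for every `k < τ`, a maximiser `k` of
`S` on `[0, τ)` is beaten by some later `S m`, necessarily with `m ≥ τ`; so `τ ≥ n` forces
`S m ≥ 0` for some `m ≥ n`. Capping `I` at a level `c` keeps the drift negative while making the
increments bounded below, so their moment generating function is finite near `0` with negative
slope there, hence `< 1` at some `t > 0`. Chernoff's bound then gives `P (S m ≥ 0) ≤ rᵐ` with
`r < 1`, so `P (τ ≥ n)` decays geometrically. The exponential moment puts `J 1` in `L²`, and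
Cauchy–Schwarz bounds `E[J n; τ ≥ n]` by `‖J 1‖₂ P (τ ≥ n) ^ (1/2)`, which is summable.
-/

open Finset Filter
open scoped ENNReal NNReal Topology

lemma sum_Icc_one_add_sum_Icc (x : ℕ → ℝ) {k m : ℕ} (hkm : k ≤ m) :
    ∑ i ∈ Icc 1 k, x i + ∑ i ∈ Icc (k + 1) m, x i = ∑ i ∈ Icc 1 m, x i := by
  simpa only [← Icc_add_one_left_eq_Ioc, zero_add] using
    sum_Ioc_consecutive x (Nat.zero_le k) hkm

lemma exists_sum_Icc_pos_of_iSup_ne_zero {x : ℕ → ℝ} {n : ℕ}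
    (h : ⨆ m : {m : ℕ // n ≤ m}, ∑ i ∈ Icc (n + 1) (m : ℕ), x i ≠ 0) :
    ∃ m, n ≤ m ∧ 0 < ∑ i ∈ Icc (n + 1) m, x i := by
  by_contra! hle
  have : Nonempty {m : ℕ // n ≤ m} := ⟨⟨n, le_rfl⟩⟩
  refine h (le_antisymm (ciSup_le fun m => hle m m.2) ?_)
  refine le_ciSup_of_le ⟨0, ?_⟩ ⟨n, le_rfl⟩ (by simp)
  rintro _ ⟨m, rfl⟩
  exact hle m m.2

lemma exists_le_sum_Icc_nonneg {x : ℕ → ℝ} {τ : ℕ}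
    (h : ∀ k < τ, ∃ m, k ≤ m ∧ 0 < ∑ i ∈ Icc (k + 1) m, x i) :
    ∃ m, τ ≤ m ∧ 0 ≤ ∑ i ∈ Icc 1 m, x i := by
  rcases Nat.eq_zero_or_pos τ with rfl | hτ
  · exact ⟨0, le_rfl, by simp⟩
  obtain ⟨k, hk, hmax⟩ := (range τ).exists_max_image (fun k => ∑ i ∈ Icc 1 k, x i)
    (nonempty_range_iff.2 hτ.ne')
  obtain ⟨m, hkm, hpos⟩ := h k (mem_range.1 hk)
  have hlt : ∑ i ∈ Icc 1 k, x i < ∑ i ∈ Icc 1 m, x i := by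
    rw [← sum_Icc_one_add_sum_Icc x hkm]
    linarith
  refine ⟨m, ?_, ?_⟩
  · by_contra! hm
    exact (hmax m (mem_range.2 hm)).not_gt hlt
  · have h0 := hmax 0 (mem_range.2 hτ)
    simp only [zero_lt_one, Icc_eq_empty_of_lt, sum_empty] at h0
    linarith

section

variable {Ω : Type*} [MeasurableSpace Ω] {P : Measure Ω}

lemma zero_mem_interior_integrableExpSet {X : Ω → ℝ} {a b : ℝ} (ha : a < 0) (hb : 0 < b)
    (hXa : Integrable (fun ω => exp (a * X ω)) P) (hXb : Integrable (fun ω => exp (b * X ω)) P) :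
    0 ∈ interior (integrableExpSet X P) :=
  mem_interior_iff_mem_nhds.2 <| mem_of_superset (Ioo_mem_nhds ha hb) fun _ ht =>
    integrable_exp_mul_of_le_of_le hXa hXb ht.1.le ht.2.le

lemma exists_pos_mgf_lt_one [IsProbabilityMeasure P] {X : Ω → ℝ}
    (h0 : 0 ∈ interior (integrableExpSet X P)) (hneg : P[X] < 0) :
    ∃ t, 0 < t ∧ Integrable (fun ω => exp (t * X ω)) P ∧ mgf X P t < 1 := by
  have hderiv : HasDerivAt (mgf X P) P[X] 0 := by
    simpa using hasDerivAt_mgf h0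
  have hslope : ∀ᶠ t in 𝓝[>] 0, t⁻¹ • (mgf X P (0 + t) - mgf X P 0) < 0 :=
    hderiv.tendsto_slope_zero_right.eventually (eventually_lt_nhds hneg)
  have hint : ∀ᶠ t in 𝓝[>] (0 : ℝ), t ∈ interior (integrableExpSet X P) :=
    nhdsWithin_le_nhds (isOpen_interior.mem_nhds h0)
  obtain ⟨t, hslope, hint, ht⟩ :=
    (hslope.and (hint.and self_mem_nhdsWithin)).exists
  refine ⟨t, ht, (interior_subset hint : t ∈ integrableExpSet X P), ?_⟩
  rw [zero_add, mgf_zero, smul_eq_mul] at hslope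
  by_contra! h
  exact hslope.not_ge (mul_nonneg (inv_pos.2 ht).le (sub_nonneg.2 h))

lemma measure_sum_nonneg_le_mgf_pow [IsProbabilityMeasure P] {ι : Type*} {Y : ι → Ω → ℝ}
    (hmeas : ∀ i, Measurable (Y i)) (hind : iIndepFun Y P) {Z : Ω → ℝ} {s : Finset ι}
    (hident : ∀ i ∈ s, IdentDistrib (Y i) Z P P) {t : ℝ} (ht : 0 ≤ t)
    (hint : Integrable (fun ω => exp (t * Z ω)) P) :
    P {ω | 0 ≤ ∑ i ∈ s, Y i ω} ≤ ENNReal.ofReal (mgf Z P t) ^ #s := by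
  have hint_i : ∀ i ∈ s, Integrable (fun ω => exp (t * Y i ω)) P := fun i hi =>
    ((hident i hi).symm.comp (measurable_const_mul t).exp).integrable_snd hint
  have hchernoff := measure_ge_le_exp_mul_mgf 0 ht (hind.integrable_exp_mul_sum hmeas hint_i)
  rw [hind.mgf_sum hmeas, prod_congr rfl fun i hi => mgf_congr_of_identDistrib _ _ (hident i hi) t,
    prod_const, mul_zero, exp_zero, one_mul] at hchernoff
  simp only [Finset.sum_apply] at hchernoff
  rw [← ofReal_measureReal, ← ENNReal.ofReal_pow mgf_nonneg]
  exact ENNReal.ofReal_le_ofReal hchernoff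

lemma integrable_exp_mul_of_ae_le [IsFiniteMeasure P] {X : Ω → ℝ} (hX : AEMeasurable X P)
    {t c : ℝ} (h : ∀ᵐ ω ∂P, t * X ω ≤ c) : Integrable (fun ω => exp (t * X ω)) P :=
  .of_bound (measurable_exp.comp_aemeasurable (hX.const_mul t)).aestronglyMeasurable (exp c)
    (h.mono fun ω hω => by rwa [norm_of_nonneg (exp_pos _).le, exp_le_exp])

lemma memLp_of_nonneg_of_integrable_exp_mul [IsFiniteMeasure P] {X : Ω → ℝ}
    (hX : ∀ᵐ ω ∂P, 0 ≤ X ω) {θ : ℝ} (hθ : 0 < θ) (hexp : Integrable (fun ω => exp (θ * X ω)) P)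
    (p : ℝ≥0) : MemLp X p P :=
  memLp_of_mem_interior_integrableExpSet (zero_mem_interior_integrableExpSet neg_one_lt_zero hθ
    (integrable_exp_mul_of_ae_le (aemeasurable_of_aemeasurable_exp_mul hθ.ne' hexp.aemeasurable)
      (c := 0) (hX.mono fun ω hω => by linarith)) hexp) p

lemma exists_lt_integral_min_natCast [IsFiniteMeasure P] {f : Ω → ℝ} (hf : Integrable f P) {a : ℝ}
    (ha : a < ∫ ω, f ω ∂P) : ∃ N : ℕ, a < ∫ ω, min (f ω) N ∂P := by
  have hlim : Tendsto (fun N : ℕ => ∫ ω, min (f ω) N ∂P) atTop (𝓝 (∫ ω, f ω ∂P)) := by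
    refine integral_tendsto_of_tendsto_of_monotone (fun N => hf.inf (integrable_const _)) hf
      (ae_of_all _ fun ω M N hMN => min_le_min le_rfl (Nat.cast_le.2 hMN))
      (ae_of_all _ fun ω => tendsto_const_nhds.congr' ?_)
    filter_upwards [eventually_ge_atTop ⌈f ω⌉₊] with N hN
    exact (min_eq_left ((Nat.le_ceil _).trans (Nat.cast_le.2 hN))).symm
  exact (hlim.eventually (eventually_gt_nhds ha)).exists

lemma measure_le_geometric_of_ladder [IsProbabilityMeasure P] {Y : ℕ → Ω → ℝ} {T : Ω → ℕ}
    {r : ℝ≥0∞} (hT : ∀ᵐ ω ∂P, ∀ k < T ω, ∃ m, k ≤ m ∧ 0 < ∑ i ∈ Icc (k + 1) m, Y i ω)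
    (hY : ∀ m, P {ω | 0 ≤ ∑ i ∈ Icc 1 m, Y i ω} ≤ r ^ m) (n : ℕ) :
    P {ω | n ≤ T ω} ≤ (1 - r)⁻¹ * r ^ n := by
  have hsub : {ω | n ≤ T ω} ≤ᵐ[P] ⋃ k, {ω | 0 ≤ ∑ i ∈ Icc 1 (n + k), Y i ω} := by
    filter_upwards [hT] with ω hω (hn : n ≤ T ω)
    obtain ⟨m, hm, hpos⟩ := exists_le_sum_Icc_nonneg hω
    refine Set.mem_iUnion.2 ⟨m - n, ?_⟩
    rwa [Set.mem_ofPred_eq, Nat.add_sub_cancel' (hn.trans hm)]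
  calc P {ω | n ≤ T ω} ≤ ∑' k, P {ω | 0 ≤ ∑ i ∈ Icc 1 (n + k), Y i ω} :=
        (measure_mono_ae hsub).trans (measure_iUnion_le _)
    _ ≤ ∑' k, r ^ n * r ^ k := ENNReal.tsum_le_tsum fun k => pow_add r n k ▸ hY (n + k)
    _ = (1 - r)⁻¹ * r ^ n := by rw [ENNReal.tsum_mul_left, ENNReal.tsum_geometric, mul_comm]

lemma setLIntegral_enorm_le_eLpNorm_two_mul {E : Type*} [NormedAddCommGroup E] {g : Ω → E}
    (hg : AEStronglyMeasurable g P) (s : Set Ω) :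
    ∫⁻ ω in s, ‖g ω‖ₑ ∂P ≤ eLpNorm g 2 P * P s ^ (1 / 2 : ℝ) := by
  rw [← eLpNorm_one_eq_lintegral_enorm]
  calc eLpNorm g 1 (P.restrict s)
      ≤ eLpNorm g 2 (P.restrict s) *
          P.restrict s Set.univ ^ (1 / (1 : ℝ≥0∞).toReal - 1 / (2 : ℝ≥0∞).toReal) :=
        eLpNorm_le_eLpNorm_mul_rpow_measure_univ one_le_two hg.restrict
    _ ≤ eLpNorm g 2 P * P s ^ (1 / 2 : ℝ) := by
        rw [Measure.restrict_apply_univ, show 1 / (1 : ℝ≥0∞).toReal - 1 / (2 : ℝ≥0∞).toReal =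
          1 / 2 by norm_num]
        gcongr
        exact Measure.restrict_le_self

lemma lintegral_enorm_sum_Icc_le {f : ℕ → Ω → ℝ} {T : Ω → ℕ} (hf : ∀ n, Measurable (f n))
    (hT : Measurable T) :
    ∫⁻ ω, ‖∑ n ∈ Icc 1 (T ω), f n ω‖ₑ ∂P ≤
      ∑' n, ∫⁻ ω in {ω | n + 1 ≤ T ω}, ‖f (n + 1) ω‖ₑ ∂P := by
  have hset : ∀ n, MeasurableSet {ω | n + 1 ≤ T ω} := fun n => hT measurableSet_Ici
  calc ∫⁻ ω, ‖∑ n ∈ Icc 1 (T ω), f n ω‖ₑ ∂P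
      ≤ ∫⁻ ω, ∑' n, {ω | n + 1 ≤ T ω}.indicator (fun ω => ‖f (n + 1) ω‖ₑ) ω ∂P := by
        refine lintegral_mono fun ω => (enorm_sum_le _ _).trans ?_
        rw [← Ico_add_one_right_eq_Icc, sum_Ico_eq_sum_range, Nat.add_sub_cancel]
        refine le_of_eq_of_le (sum_congr rfl fun n hn => ?_) (ENNReal.sum_le_tsum _)
        rw [Set.indicator_of_mem (by simpa [Nat.add_one_le_iff] using hn), add_comm]
    _ = ∑' n, ∫⁻ ω in {ω | n + 1 ≤ T ω}, ‖f (n + 1) ω‖ₑ ∂P := by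
        rw [lintegral_tsum fun n => ((hf _).enorm.indicator (hset n)).aemeasurable]
        simp_rw [lintegral_indicator (hset _)]

lemma integrable_sum_Icc_of_tail_le_geometric {f : ℕ → Ω → ℝ} {T : Ω → ℕ}
    (hf : ∀ n, Measurable (f n)) (hT : Measurable T) {C K r : ℝ≥0∞} (hC : C ≠ ∞) (hK : K ≠ ∞)
    (hr : r < 1) (hfC : ∀ n, 1 ≤ n → eLpNorm (f n) 2 P ≤ C)
    (htail : ∀ n, P {ω | n ≤ T ω} ≤ K * r ^ n) :
    Integrable (fun ω => ∑ n ∈ Icc 1 (T ω), f n ω) P := by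
  have hmeas : Measurable fun ω => ∑ n ∈ Icc 1 (T ω), f n ω :=
    (measurable_from_prod_countable_left (f := fun p : Ω × ℕ => ∑ n ∈ Icc 1 p.2, f n p.1)
      fun k => Finset.measurable_sum (Icc 1 k) fun n _ => hf n).comp (measurable_id.prodMk hT)
  have hterm : ∀ n, ∫⁻ ω in {ω | n + 1 ≤ T ω}, ‖f (n + 1) ω‖ₑ ∂P ≤
      C * K ^ (1 / 2 : ℝ) * (r ^ (1 / 2 : ℝ)) ^ n := fun n =>
    calc ∫⁻ ω in {ω | n + 1 ≤ T ω}, ‖f (n + 1) ω‖ₑ ∂P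
        ≤ eLpNorm (f (n + 1)) 2 P * P {ω | n + 1 ≤ T ω} ^ (1 / 2 : ℝ) :=
          setLIntegral_enorm_le_eLpNorm_two_mul (hf _).aestronglyMeasurable _
      _ ≤ C * (K * r ^ n) ^ (1 / 2 : ℝ) := by
          gcongr
          · exact hfC _ le_add_self
          · exact (measure_mono fun ω (h : n + 1 ≤ T ω) => (by omega : n ≤ T ω)).trans (htail n)
      _ = C * K ^ (1 / 2 : ℝ) * (r ^ (1 / 2 : ℝ)) ^ n := by
          rw [ENNReal.mul_rpow_of_nonneg _ _ (by norm_num), ← ENNReal.rpow_natCast_mul,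
            mul_comm (n : ℝ), ENNReal.rpow_mul_natCast, mul_assoc]
  refine ⟨hmeas.aestronglyMeasurable, hasFiniteIntegral_iff_enorm.2 ?_⟩
  calc ∫⁻ ω, ‖∑ n ∈ Icc 1 (T ω), f n ω‖ₑ ∂P
      ≤ ∑' n, C * K ^ (1 / 2 : ℝ) * (r ^ (1 / 2 : ℝ)) ^ n :=
        (lintegral_enorm_sum_Icc_le hf hT).trans (ENNReal.tsum_le_tsum hterm)
    _ = C * K ^ (1 / 2 : ℝ) * (1 - r ^ (1 / 2 : ℝ))⁻¹ := by
        rw [ENNReal.tsum_mul_left, ENNReal.tsum_geometric]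
    _ < ∞ := ENNReal.mul_lt_top
        (ENNReal.mul_lt_top hC.lt_top (ENNReal.rpow_lt_top_of_nonneg (by norm_num) hK))
        (ENNReal.inv_lt_top.2 (tsub_pos_of_lt (ENNReal.rpow_lt_one hr (by norm_num))))

lemma aemeasurable_of_ae_first_zero {W : ℕ → Ω → ℝ} (hW : ∀ n, Measurable (W n)) {τ : Ω → ℕ}
    (hτ : ∀ᵐ ω ∂P, W (τ ω) ω = 0 ∧ ∀ m, m < τ ω → W m ω ≠ 0) : AEMeasurable τ P := by
  classical
  have hex : ∀ ω, ∃ n, W n ω = 0 ∨ ∀ m, W m ω ≠ 0 := fun ω => by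
    by_cases h : ∃ n, W n ω = 0
    · exact h.imp fun _ => Or.inl
    · exact ⟨0, Or.inr (not_exists.1 h)⟩
  refine ⟨fun ω => Nat.find (hex ω), measurable_find hex fun n => ?_, ?_⟩
  · simp only [Set.ofPred_or, Set.ofPred_forall]
    exact (measurableSet_eq_fun (hW n) measurable_const).union
      (MeasurableSet.iInter fun m => (measurableSet_eq_fun (hW m) measurable_const).compl)
  · filter_upwards [hτ] with ω ⟨h0, hlt⟩
    exact ((Nat.find_eq_iff _).2 ⟨Or.inl h0, fun k hk h => h.elim (hlt k hk) (· _ h0)⟩).symm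

lemma exists_mgf_truncated_increment_lt_one [IsProbabilityMeasure P] {J I : Ω → ℝ} {μ θ : ℝ}
    (hμ : 0 < μ) (hJ : ∀ ω, 0 ≤ J ω) (hI : ∀ᵐ ω ∂P, 0 ≤ I ω)
    (hJint : Integrable J P) (hIint : Integrable I P) (hmean : (∫ ω, J ω ∂P) / μ < ∫ ω, I ω ∂P)
    (hθ : 0 < θ) (hexp : Integrable (fun ω => exp (θ * J ω)) P) :
    ∃ c t : ℝ, 0 < t ∧ Integrable (fun ω => exp (t * (J ω / μ - min (I ω) c))) P ∧
      mgf (fun ω => J ω / μ - min (I ω) c) P t < 1 := by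
  obtain ⟨N, hN⟩ := exists_lt_integral_min_natCast hIint hmean
  have hminint : Integrable (fun ω => min (I ω) N) P := hIint.inf (integrable_const _)
  have hYint : Integrable (fun ω => J ω / μ - min (I ω) N) P := (hJint.div_const μ).sub hminint
  have hYneg : ∫ ω, J ω / μ - min (I ω) N ∂P < 0 := by
    rw [integral_sub (hJint.div_const μ) hminint, integral_div]
    linarith
  have hint_neg : Integrable (fun ω => exp (-1 * (J ω / μ - min (I ω) N))) P :=
    integrable_exp_mul_of_ae_le hYint.aemeasurable (c := N) <| ae_of_all _ fun ω => by
      have := div_nonneg (hJ ω) hμ.le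
      linarith [min_le_right (I ω) N]
  have hint_pos : Integrable (fun ω => exp (θ * μ * (J ω / μ - min (I ω) N))) P := by
    refine hexp.mono (measurable_exp.comp_aemeasurable
      (hYint.aemeasurable.const_mul _)).aestronglyMeasurable (hI.mono fun ω hIω => ?_)
    rw [norm_of_nonneg (exp_pos _).le, norm_of_nonneg (exp_pos _).le, exp_le_exp,
      mul_sub, mul_assoc, mul_div_cancel₀ _ hμ.ne']
    have := mul_nonneg (mul_pos hθ hμ).le (le_min hIω (Nat.cast_nonneg N))
    linarith
  exact ⟨N, exists_pos_mgf_lt_one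
    (zero_mem_interior_integrableExpSet neg_one_lt_zero (by positivity) hint_neg hint_pos) hYneg⟩

end

-- Time runs backwards: index `n` stands for the paper's `-n`, so `tau ω` is `-τ`.
/-- Integrability of the IPA estimator V* = -∑_{n=1}^{-τ} J(n)/μ², where τ is the last
time (before 0) that the stationary backward waiting time hits zero, under stability and
an exponential moment condition. Index n here stands for -n ≤ 0, so -τ is `tau ω`. -/
theorem ipa_estimator_integrable
    {Ω : Type*} [MeasurableSpace Ω] (P : Measure Ω) [IsProbabilityMeasure P]
    (J I : ℕ → Ω → ℝ) (μ : ℝ) (hμ : 0 < μ)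
    (hmeas : ∀ n, Measurable (fun ω => (J n ω, I n ω)))
    (hindep : iIndepFun (fun n ω => (J n ω, I n ω)) P)
    (hident : ∀ n, 1 ≤ n →
      IdentDistrib (fun ω => (J n ω, I n ω)) (fun ω => (J 1 ω, I 1 ω)) P P)
    (hJpos : ∀ n ω, 0 ≤ J n ω) (hIpos : ∀ n, ∀ᵐ ω ∂P, 0 < I n ω)
    (hJint : Integrable (J 1) P) (hIint : Integrable (I 1) P)
    (hmean : (∫ ω, J 1 ω ∂P) / μ < ∫ ω, I 1 ω ∂P)
    (hexp : ∃ θ : ℝ, 0 < θ ∧ Integrable (fun ω => exp (θ * J 1 ω)) P)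
    (W : ℕ → Ω → ℝ)
    (hW : ∀ n ω, W n ω =
      ⨆ m : {m : ℕ // n ≤ m}, ∑ i ∈ Finset.Icc (n + 1) (m : ℕ), (J i ω / μ - I i ω))
    (tau : Ω → ℕ)
    (htau : ∀ᵐ ω ∂P, W (tau ω) ω = 0 ∧ ∀ m, m < tau ω → W m ω ≠ 0)
    (V : Ω → ℝ)
    (hV : ∀ ω, V ω = -∑ n ∈ Finset.Icc 1 (tau ω), J n ω / μ ^ 2) :
    Integrable V P := by
  obtain ⟨θ, hθ, hexpJ⟩ := hexp
  have hJm : ∀ n, Measurable (J n) := fun n => (hmeas n).fst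
  obtain ⟨c, t, ht, hint, hmgf⟩ := exists_mgf_truncated_increment_lt_one hμ (hJpos 1)
    ((hIpos 1).mono fun _ => le_of_lt) hJint hIint hmean hθ hexpJ
  set Y : ℕ → Ω → ℝ := fun i ω => J i ω / μ - min (I i ω) c
  have hY : Measurable fun q : ℝ × ℝ => q.1 / μ - min q.2 c := by fun_prop
  have hchernoff (m : ℕ) :
      P {ω | 0 ≤ ∑ i ∈ Icc 1 m, Y i ω} ≤ ENNReal.ofReal (mgf (Y 1) P t) ^ m := by
    have := measure_sum_nonneg_le_mgf_pow (Y := Y) (Z := Y 1) (s := Icc 1 m)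
      (fun i => hY.comp (hmeas i)) (hindep.comp _ fun _ => hY)
      (fun i hi => (hident i (mem_Icc.1 hi).1).comp hY) ht.le hint
    rwa [Nat.card_Icc, Nat.add_sub_cancel] at this
  have hWm (n : ℕ) : Measurable (W n) := by
    simp_rw [funext (hW n)]
    exact .iSup fun m =>
      Finset.measurable_sum _ fun i _ => ((hJm i).div_const μ).sub (hmeas i).snd
  obtain ⟨T, hTm, hτT⟩ := aemeasurable_of_ae_first_zero hWm htau
  have hladder : ∀ᵐ ω ∂P, ∀ k < T ω, ∃ m, k ≤ m ∧ 0 < ∑ i ∈ Icc (k + 1) m, Y i ω := by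
    filter_upwards [htau, hτT] with ω hω hωT k hk
    obtain ⟨m, hkm, hpos⟩ := exists_sum_Icc_pos_of_iSup_ne_zero (hW k ω ▸ hω.2 k (hωT ▸ hk))
    exact ⟨m, hkm, hpos.trans_le (sum_le_sum fun i _ => sub_le_sub_left (min_le_left _ _) _)⟩
  have hJ2 : MemLp (J 1) 2 P := by
    simpa only [ENNReal.coe_ofNat] using
      memLp_of_nonneg_of_integrable_exp_mul (ae_of_all _ (hJpos 1)) hθ hexpJ 2
  have hr : ENNReal.ofReal (mgf (Y 1) P t) < 1 := ENNReal.ofReal_lt_one.2 hmgf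
  refine ((integrable_sum_Icc_of_tail_le_geometric hJm hTm hJ2.eLpNorm_ne_top
    (ENNReal.inv_ne_top.2 (tsub_pos_of_lt hr).ne') hr
    (fun n hn => (((hident n hn).comp measurable_fst).eLpNorm_eq 2).le)
    (measure_le_geometric_of_ladder hladder hchernoff)).div_const (μ ^ 2)).neg.congr ?_
  filter_upwards [hτT] with ω hω
  rw [hV, hω, Pi.neg_apply, sum_div]
end

section
/- In the stationary backward sample path of the fork-join network, the number Q_k(0) of tasks at station k at time 0 equals the number of indices n ≥ 1 with A(-n) < 0 < A(-n) + W*_k(-n) + J_k(n), and this count is finite almost surely under stability; moreover Q_k(0) equals the finite sum ∑_{n=1}^{N} 1{A(-n) + W*_k(-n) + J_k(n) > 0} for any N with A(-N) + W*_k(-N) + J_k(N) < 0. -/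
open Filter

section PositivePart

variable {D : ℕ → ℝ} {N : ℕ}

lemma setOf_pos_eq_filter_Icc (hD : ∀ n, N < n → D n ≤ 0) :
    {n : ℕ | 1 ≤ n ∧ 0 < D n} = ↑((Finset.Icc 1 N).filter (fun n => 0 < D n)) := by
  ext n
  simp only [Set.mem_ofPred_eq, Finset.coe_filter, Finset.mem_Icc]
  constructor
  · rintro ⟨hn, hpos⟩
    exact ⟨⟨hn, not_lt.mp fun hNn => (hD n hNn).not_gt hpos⟩, hpos⟩
  · rintro ⟨⟨hn, -⟩, hpos⟩
    exact ⟨hn, hpos⟩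

lemma finite_setOf_pos (hD : ∀ n, N < n → D n ≤ 0) : {n : ℕ | 1 ≤ n ∧ 0 < D n}.Finite := by
  rw [setOf_pos_eq_filter_Icc hD]
  exact Finset.finite_toSet _

lemma ncard_setOf_pos_eq_sum (hD : ∀ n, N < n → D n ≤ 0) :
    {n : ℕ | 1 ≤ n ∧ 0 < D n}.ncard = ∑ n ∈ Finset.Icc 1 N, (if 0 < D n then 1 else 0) := by
  rw [setOf_pos_eq_filter_Icc hD, Set.ncard_coe_finset, ← Finset.card_filter]

end PositivePart

lemma neg_sum_Icc_one_neg {I : ℕ → ℝ} (hI : ∀ m, 1 ≤ m → 0 < I m) {n : ℕ} (hn : 1 ≤ n) :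
    -∑ m ∈ Finset.Icc 1 n, I m < 0 :=
  neg_neg_of_pos <| Finset.sum_pos (fun m hm => hI m (Finset.mem_Icc.mp hm).1)
    ⟨1, Finset.mem_Icc.mpr ⟨le_rfl, hn⟩⟩

/-- The number Q_k(0) of tasks at a station at time 0 equals the number of indices n ≥ 1 with
A(-n) < 0 < A(-n) + W*(-n) + J(n); this count is finite, and equals the finite sum
∑_{n=1}^N 1{A(-n) + W*(-n) + J(n) > 0} for any N with A(-N) + W*(-N) + J(N) < 0. -/
theorem tasks_in_station_count
    (I J Wb A : ℕ → ℝ)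
    (hI : ∀ m, 1 ≤ m → 0 < I m)
    (hJ : ∀ n, 0 ≤ J n)
    (hWb : ∀ n, 0 ≤ Wb n)
    (hA : ∀ n, A n = -∑ m ∈ Finset.Icc 1 n, I m)
    (D : ℕ → ℝ) (hD : ∀ n, D n = A n + Wb n + J n)
    (hdec : ∀ m n, 1 ≤ m → m < n → D n < D m)
    (htend : Tendsto D atTop atBot) :
    {n : ℕ | 1 ≤ n ∧ A n < 0 ∧ 0 < D n}.Finite ∧
    ∀ N, D N < 0 →
      {n : ℕ | 1 ≤ n ∧ A n < 0 ∧ 0 < D n}.ncard =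
        ∑ n ∈ Finset.Icc 1 N, (if 0 < D n then 1 else 0) := by
  have hset : {n : ℕ | 1 ≤ n ∧ A n < 0 ∧ 0 < D n} = {n : ℕ | 1 ≤ n ∧ 0 < D n} := by
    ext n
    simp only [Set.mem_ofPred_eq, and_congr_right_iff]
    exact fun hn => and_iff_right (hA n ▸ neg_sum_Icc_one_neg hI hn)
  have hD0 : 0 ≤ D 0 := by
    have hA0 : A 0 = 0 := by simp [hA]
    linarith [hD 0, hWb 0, hJ 0]
  -- `D 0 ≥ 0` forces `N ≥ 1`, after which `D` decreases past `N`.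
  have htail : ∀ N, D N < 0 → ∀ n, N < n → D n ≤ 0 := fun N hN n hNn =>
    (hdec N n (Nat.one_le_iff_ne_zero.mpr (by rintro rfl; linarith)) hNn).le.trans hN.le
  obtain ⟨N₀, hN₀⟩ : ∃ N, D N < 0 := (htend.eventually (eventually_lt_atBot 0)).exists
  rw [hset]
  exact ⟨finite_setOf_pos (htail N₀ hN₀), fun N hN => ncard_setOf_pos_eq_sum (htail N hN)⟩
end
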